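/- If k is even, then 0 is a root of Q_{L(4,k)} of multiplicity at least 2, and writing Q_{L(4,k)}(X) = X²·R(X), we have R(0) = (−1)^{k/2+1}·(k+4). -/

import Mathlib

open Polynomial

/-- The characteristic polynomial (over `ℝ`) of the adjacency matrix of a finite graph. -/
noncomputable def graphCharpoly {V : Type*} [Fintype V] [DecidableEq V]
    (G : SimpleGraph V) : Polynomial ℝ :=
  letI := Classical.decRel G.Adj
  (G.adjMatrix ℝ).charpoly

/-- `Q_{P_n}`: the characteristic polynomial of the path on `n` vertices. -/
noncomputable def Qpath (n : ℕ) : Polynomial ℝ := graphCharpoly (SimpleGraph.pathGraph n)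

/-- `Q_{C_n}`: the characteristic polynomial of the cycle on `n` vertices. -/
noncomputable def Qcycle (n : ℕ) : Polynomial ℝ := graphCharpoly (SimpleGraph.cycleGraph n)

/-- The lollipop `L(p,k)`: a cycle on `p` vertices with a path of `k` further
vertices attached to one cycle vertex. -/
def lollipop (p k : ℕ) : SimpleGraph (Fin p ⊕ Fin k) :=
  SimpleGraph.fromRel (fun a b =>
    match a, b with
    | Sum.inl i, Sum.inl j => ((i : ℕ) + 1) % p = (j : ℕ)
    | Sum.inl i, Sum.inr j => (i : ℕ) = 0 ∧ (j : ℕ) = 0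
    | Sum.inr i, Sum.inr j => (i : ℕ) + 1 = (j : ℕ)
    | _, _ => False)

/-!
Relabel `L(4,k)` as the path `0 - 1 - ⋯ - (k+3)` plus the chord `0 - 3`. Expanding the
characteristic determinant along the pendant vertex `k+3` gives the path-like recursion
`Q_n = X Q_{n-1} - Q_{n-2}` for `n ≥ 5`, starting from `Q_3 = X³ - 2X` and `Q_4 = X⁴ - 4X²`.
By induction on the parity classes, `Q_{2m+3} = X S` with `S(0) = 2(-1)^{m+1}` and
`Q_{2m+4} = X² R` with `R(0) = (-1)^{m+1}(2m+4)`.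
-/

namespace Matrix

variable {R : Type*} [CommRing R] {n : ℕ}

theorem det_succ_of_col_last_eq_zero (M : Matrix (Fin (n + 1)) (Fin (n + 1)) R)
    (hcol : ∀ i : Fin n, M i.castSucc (Fin.last n) = 0) :
    M.det = M (Fin.last n) (Fin.last n) * (M.submatrix Fin.castSucc Fin.castSucc).det := by
  rw [det_succ_column M (Fin.last n), Fin.sum_univ_castSucc]
  simp [hcol, Fin.succAbove_last]

theorem det_succ_succ_of_pendant (M : Matrix (Fin (n + 2)) (Fin (n + 2)) R)
    (hrow : ∀ j : Fin n, M (Fin.last _) j.castSucc.castSucc = 0)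
    (hcol : ∀ i : Fin n, M i.castSucc.castSucc (Fin.last _) = 0) :
    M.det = M (Fin.last _) (Fin.last _) * (M.submatrix Fin.castSucc Fin.castSucc).det -
      M (Fin.last _) (Fin.last n).castSucc * M (Fin.last n).castSucc (Fin.last _) *
        (M.submatrix (Fin.castSucc ∘ Fin.castSucc) (Fin.castSucc ∘ Fin.castSucc)).det := by
  have hsucc : (Fin.last n).castSucc.succAbove ∘ Fin.castSucc = Fin.castSucc ∘ Fin.castSucc :=
    funext fun j => Fin.succAbove_castSucc_of_lt _ _ (Fin.castSucc_lt_last j)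
  rw [det_succ_row M (Fin.last _), Fin.sum_univ_castSucc, Fin.sum_univ_castSucc,
    det_succ_of_col_last_eq_zero _ (by simpa using hcol)]
  simp [hrow, hsucc, Fin.succAbove_last]
  ring

theorem charmatrix_submatrix {m n : Type*} [Fintype m] [Fintype n] [DecidableEq m]
    [DecidableEq n] (A : Matrix n n R) {e : m → n} (he : Function.Injective e) :
    (A.submatrix e e).charmatrix = A.charmatrix.submatrix e e := by
  ext i j : 1
  by_cases h : i = j
  · simp [h]
  · simp [h, charmatrix_apply_ne _ _ _ (he.ne h)]

end Matrix

theorem graphCharpoly_eq_of_iso {V W : Type*} [Fintype V] [DecidableEq V] [Fintype W]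
    [DecidableEq W] {G : SimpleGraph V} {H : SimpleGraph W} (e : G ≃g H) :
    graphCharpoly G = graphCharpoly H := by
  classical
  rw [graphCharpoly, graphCharpoly, ← Matrix.charpoly_reindex (e : V ≃ W),
    e.reindex_adjMatrix ℝ]

theorem graphCharpoly_eq_of_pendant {n : ℕ} (G : SimpleGraph (Fin (n + 2)))
    (hadj : G.Adj (Fin.last _) (Fin.last n).castSucc)
    (hpend : ∀ j : Fin n, ¬ G.Adj (Fin.last _) j.castSucc.castSucc) :
    graphCharpoly G = X * graphCharpoly (G.comap Fin.castSucc) -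
      graphCharpoly ((G.comap Fin.castSucc).comap Fin.castSucc) := by
  simp only [graphCharpoly, Matrix.charpoly]
  rw [Matrix.det_succ_succ_of_pendant]
  · rw [← Matrix.charmatrix_submatrix _ (Fin.castSucc_injective _),
      ← Matrix.charmatrix_submatrix _ ((Fin.castSucc_injective _).comp (Fin.castSucc_injective _)),
      Matrix.charmatrix_apply_eq, Matrix.charmatrix_apply_ne _ _ _ (Fin.castSucc_lt_last _).ne',
      Matrix.charmatrix_apply_ne _ _ _ (Fin.castSucc_lt_last _).ne]
    simp [hadj, hadj.symm]
    -- the adjacency matrix of `G.comap f` is definitionally `(G.adjMatrix ℝ).submatrix f f`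
    rfl
  · intro j
    rw [Matrix.charmatrix_apply_ne _ _ _ (Fin.castSucc_lt_last _).ne']
    simp [hpend]
  · intro i
    rw [Matrix.charmatrix_apply_ne _ _ _ (Fin.castSucc_lt_last _).ne]
    simpa using fun h => hpend i h.symm

/-- `chordedPath (k + 4)` is `L(4,k)` relabelled: the cycle is `0 - 1 - 2 - 3 - 0` and the
tail `3 - 4 - ⋯ - (k+3)` hangs off vertex `3`. -/
def chordedPath (n : ℕ) : SimpleGraph (Fin n) :=
  SimpleGraph.fromRel fun i j => (i : ℕ) + 1 = j ∨ ((i : ℕ) = 0 ∧ (j : ℕ) = 3)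

theorem chordedPath_adj {n : ℕ} {i j : Fin n} :
    (chordedPath n).Adj i j ↔ (i : ℕ) + 1 = j ∨ (j : ℕ) + 1 = i ∨
      ((i : ℕ) = 0 ∧ (j : ℕ) = 3) ∨ ((j : ℕ) = 0 ∧ (i : ℕ) = 3) := by
  simp only [chordedPath, SimpleGraph.fromRel_adj, ne_eq, Fin.ext_iff]
  omega

theorem chordedPath_comap_castSucc (n : ℕ) :
    (chordedPath (n + 1)).comap Fin.castSucc = chordedPath n := by
  ext i j
  simp only [SimpleGraph.comap_adj, chordedPath_adj, Fin.val_castSucc]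

def lollipopFourEquiv (k : ℕ) : Fin 4 ⊕ Fin k ≃ Fin (k + 4) :=
  ((Fin.revPerm.sumCongr (Equiv.refl (Fin k))).trans finSumFinEquiv).trans (finCongr (by omega))

@[simp] theorem lollipopFourEquiv_inl (k : ℕ) (i : Fin 4) :
    (lollipopFourEquiv k (Sum.inl i) : ℕ) = 3 - i := by
  simp [lollipopFourEquiv, Fin.rev]

@[simp] theorem lollipopFourEquiv_inr (k : ℕ) (j : Fin k) :
    (lollipopFourEquiv k (Sum.inr j) : ℕ) = 4 + j := by
  simp [lollipopFourEquiv]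
  omega

def lollipopFourIso (k : ℕ) : lollipop 4 k ≃g chordedPath (k + 4) where
  toEquiv := lollipopFourEquiv k
  map_rel_iff' {a b} := by
    rw [chordedPath_adj]
    rcases a with i | i <;> rcases b with j | j
    · fin_cases i <;> fin_cases j <;> simp [lollipop]
    · fin_cases i <;> simp [lollipop] <;> omega
    · fin_cases j <;> simp [lollipop] <;> omega
    · simp only [lollipop, SimpleGraph.fromRel_adj, lollipopFourEquiv_inr, ne_eq, Sum.inr.injEq,
        Fin.ext_iff]
      omega

theorem graphCharpoly_chordedPath_three : graphCharpoly (chordedPath 3) = X ^ 3 - 2 * X := by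
  rw [graphCharpoly, Matrix.charpoly, Matrix.det_fin_three]
  simp [chordedPath_adj]
  ring

theorem graphCharpoly_chordedPath_four : graphCharpoly (chordedPath 4) = X ^ 4 - 4 * X ^ 2 := by
  rw [graphCharpoly, Matrix.charpoly, Matrix.det_succ_row_zero]
  simp [Fin.sum_univ_succ, Matrix.det_fin_three, chordedPath_adj, Fin.succAbove]
  ring

theorem graphCharpoly_chordedPath_add_five (n : ℕ) :
    graphCharpoly (chordedPath (n + 5)) =
      X * graphCharpoly (chordedPath (n + 4)) - graphCharpoly (chordedPath (n + 3)) := by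
  rw [graphCharpoly_eq_of_pendant, chordedPath_comap_castSucc, chordedPath_comap_castSucc]
  · simp [chordedPath_adj]
  · intro j
    simp only [chordedPath_adj, Fin.val_last, Fin.val_castSucc]
    omega

theorem graphCharpoly_chordedPath_factor (m : ℕ) :
    (∃ S : ℝ[X], graphCharpoly (chordedPath (2 * m + 3)) = X * S ∧
        S.eval 0 = 2 * (-1) ^ (m + 1)) ∧
      ∃ R : ℝ[X], graphCharpoly (chordedPath (2 * m + 4)) = X ^ 2 * R ∧
        R.eval 0 = (-1) ^ (m + 1) * (2 * m + 4) := by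
  induction m with
  | zero =>
    refine ⟨⟨X ^ 2 - 2, ?_, by norm_num⟩, ⟨X ^ 2 - 4, ?_, by norm_num⟩⟩
    · rw [graphCharpoly_chordedPath_three]; ring
    · rw [graphCharpoly_chordedPath_four]; ring
  | succ m ih =>
    obtain ⟨⟨S, hS, hS0⟩, ⟨R, hR, hR0⟩⟩ := ih
    have hodd : graphCharpoly (chordedPath (2 * (m + 1) + 3)) = X * (X ^ 2 * R - S) := by
      rw [show 2 * (m + 1) + 3 = 2 * m + 5 by ring, graphCharpoly_chordedPath_add_five, hR, hS]
      ring
    refine ⟨⟨X ^ 2 * R - S, hodd, ?_⟩, ⟨X ^ 2 * R - S - R, ?_, ?_⟩⟩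
    · simp [hS0, pow_succ]
    · rw [show 2 * (m + 1) + 4 = 2 * m + 6 by ring, graphCharpoly_chordedPath_add_five,
        show 2 * m + 5 = 2 * (m + 1) + 3 by ring, hodd, hR]
      ring
    · simp [hS0, hR0, pow_succ]
      ring

/-- If `k` is even then `0` is a root of `Q_{L(4,k)}` of multiplicity at least `2`, and
writing `Q_{L(4,k)}(X) = X²·R(X)` one has `R(0) = (−1)^{k/2+1}·(k+4)`. -/
theorem lollipop_four_charpoly_eval_zero (k : ℕ) (hk : Even k) :
    (Polynomial.X ^ 2 ∣ graphCharpoly (lollipop 4 k)) ∧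
      ∀ R : Polynomial ℝ, graphCharpoly (lollipop 4 k) = Polynomial.X ^ 2 * R →
        R.eval 0 = (-1 : ℝ) ^ (k / 2 + 1) * ((k : ℝ) + 4) := by
  obtain ⟨m, rfl⟩ := hk
  obtain ⟨R₀, hR₀, hR₀_eval⟩ := (graphCharpoly_chordedPath_factor m).2
  have hQ : graphCharpoly (lollipop 4 (m + m)) = X ^ 2 * R₀ := by
    rw [graphCharpoly_eq_of_iso (lollipopFourIso (m + m)), ← hR₀, two_mul]
  refine ⟨⟨R₀, hQ⟩, fun R hR => ?_⟩
  obtain rfl : R = R₀ := mul_left_cancel₀ (pow_ne_zero 2 X_ne_zero) (hR.symm.trans hQ)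
  rw [hR₀_eval, show (m + m) / 2 = m by omega]
  push_cast
  ring
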